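/- In Horibe's weight-balancing split of a probability sequence ⟨p₁,…,pₙ⟩ at index k minimizing |∑_{z≤k} p_z − ∑_{z>k} p_z|, if W_L = ∑_{z=1}^{k} p_z and W_R = ∑_{z=k+1}^{n} p_z, then |W_L − W_R| ≤ max(p_k, p_{k+1}). -/
import Mathlib


/-- No codeword is a prefix of another. -/
def PrefixFree {n : ℕ} (w : Fin n → List Bool) : Prop :=
  ∀ i j : Fin n, i ≠ j → ¬ (w i <+: w j)

/-- The codewords are strictly increasing in the lexicographic order on binary strings. -/
def LexIncreasing {n : ℕ} (w : Fin n → List Bool) : Prop :=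
  ∀ i j : Fin n, i < j → List.Lex (· < ·) (w i) (w j)

/-- A binary alphabetic code: prefix-free and lexicographically increasing codewords. -/
def IsAlphabeticCode {n : ℕ} (w : Fin n → List Bool) : Prop :=
  PrefixFree w ∧ LexIncreasing w

private lemma sum_Icc_bot (p : ℕ → ℝ) {a b : ℕ} (h : a ≤ b) :
    ∑ z ∈ Finset.Icc a b, p z = p a + ∑ z ∈ Finset.Icc (a + 1) b, p z := by
  rw [Finset.Icc_eq_cons_Ioc h, Finset.sum_cons, Finset.Icc_add_one_left_eq_Ioc]

/-- At Horibe's optimal balancing split k, the imbalance between the two parts is at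
most max(p_k, p_{k+1}). -/
theorem horibe_split (n : ℕ) (hn : 2 ≤ n) (p : ℕ → ℝ)
    (hp : ∀ z, 1 ≤ z → z ≤ n → 0 < p z) (k : ℕ) (hk1 : 1 ≤ k) (hk2 : k ≤ n - 1)
    (hopt : ∀ j, 1 ≤ j → j ≤ n - 1 →
      |(∑ z ∈ Finset.Icc 1 k, p z) - ∑ z ∈ Finset.Icc (k + 1) n, p z| ≤
        |(∑ z ∈ Finset.Icc 1 j, p z) - ∑ z ∈ Finset.Icc (j + 1) n, p z|) :
    |(∑ z ∈ Finset.Icc 1 k, p z) - ∑ z ∈ Finset.Icc (k + 1) n, p z| ≤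
      max (p k) (p (k + 1)) := by
  have hkn : k + 1 ≤ n := by omega
  set S : ℕ → ℝ := fun j => ∑ z ∈ Finset.Icc 1 j, p z with hS
  set T : ℕ → ℝ := fun j => ∑ z ∈ Finset.Icc (j + 1) n, p z with hT
  have hpk : 0 < p k := hp k hk1 (by omega)
  have hpk1 : 0 < p (k + 1) := hp (k + 1) (by omega) hkn
  have hSpos : ∀ j, 1 ≤ j → j ≤ n → 0 ≤ S j := by
    intro j h1 h2
    exact Finset.sum_nonneg fun z hz => by
      simp only [Finset.mem_Icc] at hz
      exact le_of_lt (hp z hz.1 (le_trans hz.2 h2))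
  have hTpos : ∀ j, j + 1 ≤ n → 0 ≤ T j := by
    intro j h
    exact Finset.sum_nonneg fun z hz => by
      simp only [Finset.mem_Icc] at hz
      exact le_of_lt (hp z (by omega) hz.2)
  rcases le_or_gt 0 (S k - T k) with hD | hD
  · -- D ≥ 0 : show S k - T k ≤ p k
    refine le_trans ?_ (le_max_left _ _)
    rw [abs_of_nonneg hD]
    rcases eq_or_lt_of_le hk1 with hk | hk
    · -- k = 1
      have hS1 : S 1 = p 1 := by simp [hS]
      have := hTpos 1 (by omega)
      rw [← hk] at *
      linarith [hTpos 1 (by omega)]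
    · -- k ≥ 2, use j = k - 1
      obtain ⟨m, rfl⟩ : ∃ m, k = m + 1 := ⟨k - 1, by omega⟩
      have hm1 : 1 ≤ m := by omega
      have hopt0 := hopt m hm1 (by omega)
      have hopt' : |S (m + 1) - T (m + 1)| ≤ |S m - T m| := hopt0
      have hSrec : S (m + 1) = S m + p (m + 1) := by
        rw [hS]; exact Finset.sum_Icc_succ_top (by omega) p
      have hTrec : T m = p (m + 1) + T (m + 1) := by
        rw [hT]; exact sum_Icc_bot p (by omega)
      rw [hSrec, hTrec, abs_of_nonneg (by rw [← hSrec]; linarith)] at hopt'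
      rcases abs_cases (S m - (p (m + 1) + T (m + 1))) with ⟨he, _⟩ | ⟨he, _⟩ <;>
        rw [he] at hopt' <;> rw [hSrec] <;> linarith
  · -- D < 0 : show T k - S k ≤ p (k+1)
    refine le_trans ?_ (le_max_right _ _)
    rw [abs_of_neg hD]
    rcases eq_or_lt_of_le hk2 with hk | hk
    · -- k = n - 1, so k + 1 = n
      have hkn' : k + 1 = n := by omega
      have hTn : T k = p (k + 1) := by
        rw [hT]; simp [hkn']
      rw [hTn]
      linarith [hSpos k hk1 (by omega)]
    · -- k + 1 ≤ n - 1, use j = k + 1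
      have hopt0 := hopt (k + 1) (by omega) (by omega)
      have hopt' : |S k - T k| ≤ |S (k + 1) - T (k + 1)| := hopt0
      have hSrec : S (k + 1) = S k + p (k + 1) := by
        rw [hS]; exact Finset.sum_Icc_succ_top (by omega) p
      have hTrec : T k = p (k + 1) + T (k + 1) := by
        rw [hT]; exact sum_Icc_bot p (by omega)
      rw [hSrec] at hopt'
      rw [abs_of_neg hD] at hopt'
      have hTrec' : T (k + 1) = T k - p (k + 1) := by linarith
      rw [hTrec'] at hopt'
      rcases abs_cases (S k + p (k + 1) - (T k - p (k + 1))) with ⟨he, _⟩ | ⟨he, _⟩ <;>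
        rw [he] at hopt' <;> linarith
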